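/- arXiv:2505.06180 — 6 statements merged into one kernel-verified Lean document; each statement's English description precedes it below -/
import Mathlib

section
/- Let T : A → A be mean nonexpansive with fixed point p, and define the iteration x_{n+1} = (1 − αₙ)xₙ + αₙ T( (rₙ/(rₙ+1))xₙ + (1/(rₙ+1))Txₙ ) with αₙ ∈ [0,1] and rₙ ≥ 0. Then d(x_{n+1}, p) ≤ d(xₙ, p) for all n; in particular {xₙ} is Fejér monotone with respect to F(T) and limₙ d(xₙ, p) exists. -/
/-! The closed balls around a fixed point `q`, intersected with `A`, are convex and mapped into
themselves by `T`, because the mean nonexpansive inequality with `y = q` reads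
`‖T z - q‖ ≤ (a + b) ‖z - q‖`. Each step of the iteration is built from `T` and convex combinations,
so it also maps these sets into themselves; hence `‖xₙ - q‖` is nonincreasing, and it converges
since it is bounded below by `0`. -/

open Set Metric Filter

section

variable {X : Type*} [NormedAddCommGroup X]

def MeanNonexpansiveOn (a b : ℝ) (T : X → X) (A : Set X) : Prop :=
  ∀ x ∈ A, ∀ y ∈ A, ‖T x - T y‖ ≤ a * ‖x - y‖ + b * ‖x - T y‖

theorem MeanNonexpansiveOn.norm_apply_sub_le {a b : ℝ} {T : X → X} {A : Set X}
    (hT : MeanNonexpansiveOn a b T A) (hab : a + b ≤ 1) {q z : X} (hqA : q ∈ A) (hq : T q = q)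
    (hz : z ∈ A) : ‖T z - q‖ ≤ ‖z - q‖ :=
  calc ‖T z - q‖ ≤ a * ‖z - q‖ + b * ‖z - q‖ := by simpa only [hq] using hT z hz q hqA
    _ = (a + b) * ‖z - q‖ := by ring
    _ ≤ ‖z - q‖ := mul_le_of_le_one_left (norm_nonneg _) hab

theorem MeanNonexpansiveOn.mapsTo_inter_closedBall {a b : ℝ} {T : X → X} {A : Set X}
    (hT : MeanNonexpansiveOn a b T A) (hab : a + b ≤ 1) (hmaps : MapsTo T A A) {q : X}
    (hqA : q ∈ A) (hq : T q = q) (R : ℝ) :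
    MapsTo T (A ∩ closedBall q R) (A ∩ closedBall q R) := fun _ ⟨hzA, hzR⟩ =>
  ⟨hmaps hzA, mem_closedBall_iff_norm.2 <|
    (hT.norm_apply_sub_le hab hqA hq hzA).trans (mem_closedBall_iff_norm.1 hzR)⟩

variable [NormedSpace ℝ X]

noncomputable def meanMannStep (T : X → X) (α r : ℝ) (x : X) : X :=
  (1 - α) • x + α • T ((r / (r + 1)) • x + (1 / (r + 1)) • T x)

theorem Convex.meanMannStep_mem {C : Set X} (hC : Convex ℝ C) {T : X → X} (hTC : MapsTo T C C)
    {α r : ℝ} (hα : α ∈ Icc (0 : ℝ) 1) (hr : 0 ≤ r) {x : X} (hx : x ∈ C) :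
    meanMannStep T α r x ∈ C := by
  have hy : (r / (r + 1)) • x + (1 / (r + 1)) • T x ∈ C :=
    hC hx (hTC hx) (by positivity) (by positivity) (by field_simp)
  exact hC hx (hTC hy) (by linarith [hα.2]) hα.1 (by ring)

end

theorem mean_value_mann_fejer_monotone_general
    {X : Type*} [NormedAddCommGroup X] [NormedSpace ℝ X]
    (A : Set X) (hAconv : Convex ℝ A)
    (T : X → X) (hmaps : Set.MapsTo T A A)
    (a b : ℝ) (hab : a + b ≤ 1)
    (hT : ∀ x ∈ A, ∀ y ∈ A, ‖T x - T y‖ ≤ a * ‖x - y‖ + b * ‖x - T y‖)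
    (p : X) (hpA : p ∈ A) (hp : T p = p)
    (α : ℕ → ℝ) (hα : ∀ n, α n ∈ Set.Icc (0 : ℝ) 1)
    (r : ℕ → ℝ) (hr : ∀ n, 0 ≤ r n)
    (x : ℕ → X) (hx0 : x 0 ∈ A)
    (hiter : ∀ n, x (n + 1) =
      (1 - α n) • x n + α n • T ((r n / (r n + 1)) • x n + (1 / (r n + 1)) • T (x n))) :
    (∀ n, ‖x (n + 1) - p‖ ≤ ‖x n - p‖) ∧
    (∀ q ∈ A, T q = q → ∀ n, ‖x (n + 1) - q‖ ≤ ‖x n - q‖) ∧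
    ∃ l : ℝ, Filter.Tendsto (fun n => ‖x n - p‖) Filter.atTop (nhds l) := by
  have hmem : ∀ n, x n ∈ A := fun n => by
    induction n with
    | zero => exact hx0
    | succ n ih => exact hiter n ▸ hAconv.meanMannStep_mem hmaps (hα n) (hr n) ih
  have fejer : ∀ q ∈ A, T q = q → ∀ n, ‖x (n + 1) - q‖ ≤ ‖x n - q‖ := fun q hqA hq n => by
    have hball : x n ∈ A ∩ closedBall q ‖x n - q‖ :=
      ⟨hmem n, mem_closedBall_iff_norm.2 le_rfl⟩
    have hstep := (hAconv.inter (convex_closedBall q _)).meanMannStep_mem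
      (MeanNonexpansiveOn.mapsTo_inter_closedBall hT hab hmaps hqA hq _) (hα n) (hr n) hball
    rw [hiter n]
    exact mem_closedBall_iff_norm.1 hstep.2
  have hanti : Antitone fun n => ‖x n - p‖ := antitone_nat_of_succ_le (fejer p hpA hp)
  exact ⟨fejer p hpA hp, fejer,
    _, tendsto_atTop_ciInf hanti ⟨0, by rintro _ ⟨n, rfl⟩; exact norm_nonneg _⟩⟩

theorem mean_value_mann_fejer_monotone
    {X : Type*} [NormedAddCommGroup X] [NormedSpace ℝ X]
    (A : Set X) (hA : A.Nonempty) (hAc : IsClosed A) (hAconv : Convex ℝ A)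
    (T : X → X) (hmaps : Set.MapsTo T A A)
    (a b : ℝ) (ha : 0 ≤ a) (hb : 0 ≤ b) (hab : a + b ≤ 1)
    (hT : ∀ x ∈ A, ∀ y ∈ A, ‖T x - T y‖ ≤ a * ‖x - y‖ + b * ‖x - T y‖)
    (p : X) (hpA : p ∈ A) (hp : T p = p)
    (α : ℕ → ℝ) (hα : ∀ n, α n ∈ Set.Icc (0 : ℝ) 1)
    (r : ℕ → ℝ) (hr : ∀ n, 0 ≤ r n)
    (x : ℕ → X) (hx0 : x 0 ∈ A)
    (hiter : ∀ n, x (n + 1) =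
      (1 - α n) • x n + α n • T ((r n / (r n + 1)) • x n + (1 / (r n + 1)) • T (x n))) :
    (∀ n, ‖x (n + 1) - p‖ ≤ ‖x n - p‖) ∧
    (∀ q ∈ A, T q = q → ∀ n, ‖x (n + 1) - q‖ ≤ ‖x n - q‖) ∧
    ∃ l : ℝ, Filter.Tendsto (fun n => ‖x n - p‖) Filter.atTop (nhds l) :=
  mean_value_mann_fejer_monotone_general A hAconv T hmaps a b hab hT p hpA hp α hα r hr x hx0 hiter
end

section
/- Let {xₙ} be the mean-value Mann iteration for a mean nonexpansive mapping T with F(T) ≠ ∅ and b < 1, on a closed convex subset of a complete uniformly convex hyperbolic space. Then {xₙ} converges strongly to a fixed point of T if and only if liminfₙ d(xₙ, F(T)) = 0. -/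
/-!
A mean nonexpansive map with `a + b ≤ 1` is quasi-nonexpansive: for a fixed point `p`,
`‖T y - p‖ ≤ a ‖y - p‖ + b ‖y - p‖ ≤ ‖y - p‖`. Hence `T` maps `A ∩ closedBall p R` into
itself, and so does the mean-value Mann step, which only takes convex combinations and applies `T`. The
iteration is therefore Fejér monotone with respect to the fixed point set `F`, which is closed.
For a Fejér monotone sequence `d(xₙ, F)` is antitone and `d(xₘ, xₙ) ≤ 2 d(x_N, F)` for
`m, n ≥ N`, so `liminf d(xₙ, F) = 0` makes it a Cauchy sequence whose limit lies in `F`.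
-/

open Filter Metric Topology

section Fejer

variable {X : Type*} [MetricSpace X] {F : Set X} {x : ℕ → X}

theorem antitone_infDist_of_fejer (hF : F.Nonempty)
    (hx : ∀ p ∈ F, Antitone fun n => dist (x n) p) :
    Antitone fun n => infDist (x n) F := by
  intro m n hmn
  rw [le_infDist hF]
  exact fun p hp => (infDist_le_dist_of_mem hp).trans (hx p hp hmn)

theorem dist_le_two_mul_infDist_of_fejer (hF : F.Nonempty)
    (hx : ∀ p ∈ F, Antitone fun n => dist (x n) p) {N m n : ℕ} (hm : N ≤ m) (hn : N ≤ n) :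
    dist (x m) (x n) ≤ 2 * infDist (x N) F := by
  suffices dist (x m) (x n) / 2 ≤ infDist (x N) F by linarith
  rw [le_infDist hF]
  intro p hp
  have := dist_triangle_right (x m) (x n) p
  linarith [hx p hp hm, hx p hp hn]

theorem tendsto_infDist_of_fejer (hF : F.Nonempty)
    (hx : ∀ p ∈ F, Antitone fun n => dist (x n) p)
    (hlim : liminf (fun n => infDist (x n) F) atTop = 0) :
    Tendsto (fun n => infDist (x n) F) atTop (𝓝 0) := by
  have hbdd : BddBelow (Set.range fun n => infDist (x n) F) :=
    ⟨0, by rintro _ ⟨n, rfl⟩; exact infDist_nonneg⟩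
  have htend := tendsto_atTop_ciInf (antitone_infDist_of_fejer hF hx) hbdd
  rwa [← htend.liminf_eq, hlim] at htend

theorem exists_tendsto_mem_iff_liminf_infDist_eq_zero_of_fejer [CompleteSpace X]
    (hFc : IsClosed F) (hF : F.Nonempty) (hx : ∀ p ∈ F, Antitone fun n => dist (x n) p) :
    (∃ q ∈ F, Tendsto x atTop (𝓝 q)) ↔ liminf (fun n => infDist (x n) F) atTop = 0 := by
  constructor
  · rintro ⟨q, hq, hxq⟩
    exact (squeeze_zero (fun n => infDist_nonneg) (fun n => infDist_le_dist_of_mem hq)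
      (tendsto_iff_dist_tendsto_zero.1 hxq)).liminf_eq
  · intro hlim
    have hinf := tendsto_infDist_of_fejer hF hx hlim
    have hcauchy : CauchySeq x :=
      cauchySeq_of_le_tendsto_0 (fun N => 2 * infDist (x N) F)
        (fun m n N hm hn => dist_le_two_mul_infDist_of_fejer hF hx hm hn)
        (by simpa using hinf.const_mul 2)
    obtain ⟨q, hxq⟩ := cauchySeq_tendsto_of_complete hcauchy
    have hq : infDist q F = 0 :=
      tendsto_nhds_unique (((continuous_infDist_pt F).tendsto q).comp hxq) hinf
    exact ⟨q, (hFc.mem_iff_infDist_zero hF).2 hq, hxq⟩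

end Fejer

theorem isClosed_fixedPoints_of_dist_map_le {X : Type*} [MetricSpace X] {A : Set X}
    {T : X → X} (hA : IsClosed A)
    (hT : ∀ y ∈ A, ∀ p ∈ A, T p = p → dist (T y) p ≤ dist y p) :
    IsClosed {q | q ∈ A ∧ T q = q} := by
  refine isSeqClosed_iff_isClosed.1 fun u q hu huq => ?_
  have hqA : q ∈ A := hA.isSeqClosed (fun n => (hu n).1) huq
  have huTq : Tendsto u atTop (𝓝 (T q)) := by
    refine tendsto_iff_dist_tendsto_zero.2 <|
      squeeze_zero (fun n => dist_nonneg) (fun n => ?_) (tendsto_iff_dist_tendsto_zero.1 huq)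
    rw [dist_comm, dist_comm (u n)]
    exact hT q hqA (u n) (hu n).1 (hu n).2
  exact ⟨hqA, tendsto_nhds_unique huTq huq⟩

theorem dist_map_le_of_mean_nonexpansive {E : Type*} [SeminormedAddCommGroup E]
    {A : Set E} {T : E → E} {a b : ℝ} (hab : a + b ≤ 1)
    (hT : ∀ x ∈ A, ∀ y ∈ A, ‖T x - T y‖ ≤ a * ‖x - y‖ + b * ‖x - T y‖)
    {y p : E} (hy : y ∈ A) (hp : p ∈ A) (hTp : T p = p) : dist (T y) p ≤ dist y p := by
  have h := hT y hy p hp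
  rw [hTp] at h
  rw [dist_eq_norm, dist_eq_norm]
  nlinarith [norm_nonneg (y - p)]

section MeanValueMann

variable {E : Type*} [AddCommGroup E] [Module ℝ E]

noncomputable def meanValueMannStep (T : E → E) (α r : ℝ) (u : E) : E :=
  (1 - α) • u + α • T ((r / (r + 1)) • u + (1 / (r + 1)) • T u)

theorem meanValueMannStep_mem {T : E → E} {S : Set E} (hS : Convex ℝ S) (hTS : Set.MapsTo T S S)
    {α r : ℝ} (hα : α ∈ Set.Icc (0 : ℝ) 1) (hr : 0 ≤ r) {u : E} (hu : u ∈ S) :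
    meanValueMannStep T α r u ∈ S := by
  have hr1 : 0 < r + 1 := by linarith
  have hy : (r / (r + 1)) • u + (1 / (r + 1)) • T u ∈ S :=
    hS hu (hTS hu) (by positivity) (by positivity) (by field_simp)
  exact hS hu (hTS hy) (by linarith [hα.2]) hα.1 (by ring)

end MeanValueMann

theorem mean_value_mann_strong_convergence_iff_general
    {X : Type*} [NormedAddCommGroup X] [NormedSpace ℝ X]
    [CompleteSpace X]
    (A : Set X) (hAc : IsClosed A) (hAconv : Convex ℝ A)
    (T : X → X) (hmaps : Set.MapsTo T A A)
    (a b : ℝ) (hab : a + b ≤ 1)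
    (hT : ∀ x ∈ A, ∀ y ∈ A, ‖T x - T y‖ ≤ a * ‖x - y‖ + b * ‖x - T y‖)
    (hF : ∃ p ∈ A, T p = p)
    (α : ℕ → ℝ) (hα : ∀ n, α n ∈ Set.Icc (0 : ℝ) 1)
    (r : ℕ → ℝ) (hr : ∀ n, 0 ≤ r n)
    (x : ℕ → X) (hx0 : x 0 ∈ A)
    (hiter : ∀ n, x (n + 1) =
      (1 - α n) • x n + α n • T ((r n / (r n + 1)) • x n + (1 / (r n + 1)) • T (x n))) :
    (∃ q, q ∈ A ∧ T q = q ∧ Filter.Tendsto x Filter.atTop (nhds q)) ↔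
      Filter.liminf (fun n => Metric.infDist (x n) {q | q ∈ A ∧ T q = q})
        Filter.atTop = 0 := by
  have hstep : ∀ n, x (n + 1) = meanValueMannStep T (α n) (r n) (x n) := hiter
  have hquasi : ∀ y ∈ A, ∀ p ∈ A, T p = p → dist (T y) p ≤ dist y p :=
    fun y hy p hp hTp => dist_map_le_of_mean_nonexpansive hab hT hy hp hTp
  have hxA : ∀ n, x n ∈ A := by
    intro n
    induction n with
    | zero => exact hx0
    | succ n ih => rw [hstep]; exact meanValueMannStep_mem hAconv hmaps (hα n) (hr n) ih
  have hfejer : ∀ p ∈ {q | q ∈ A ∧ T q = q}, Antitone fun n => dist (x n) p := by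
    rintro p ⟨hpA, hTp⟩
    refine antitone_nat_of_succ_le fun n => ?_
    have hball :
        Set.MapsTo T (A ∩ closedBall p (dist (x n) p)) (A ∩ closedBall p (dist (x n) p)) :=
      fun y hy => ⟨hmaps hy.1, (hquasi y hy.1 p hpA hTp).trans hy.2⟩
    rw [hstep]
    exact (meanValueMannStep_mem (hAconv.inter (convex_closedBall p _)) hball (hα n) (hr n)
      ⟨hxA n, mem_closedBall.2 le_rfl⟩).2
  rw [← exists_tendsto_mem_iff_liminf_infDist_eq_zero_of_fejer
    (isClosed_fixedPoints_of_dist_map_le hAc hquasi) hF hfejer]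
  simp only [Set.mem_ofPred_eq, and_assoc]

theorem mean_value_mann_strong_convergence_iff
    {X : Type*} [NormedAddCommGroup X] [NormedSpace ℝ X] [UniformConvexSpace X]
    [CompleteSpace X]
    (A : Set X) (hA : A.Nonempty) (hAc : IsClosed A) (hAconv : Convex ℝ A)
    (T : X → X) (hmaps : Set.MapsTo T A A)
    (a b : ℝ) (ha : 0 ≤ a) (hb : 0 ≤ b) (hab : a + b ≤ 1) (hb1 : b < 1)
    (hT : ∀ x ∈ A, ∀ y ∈ A, ‖T x - T y‖ ≤ a * ‖x - y‖ + b * ‖x - T y‖)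
    (hF : ∃ p ∈ A, T p = p)
    (α : ℕ → ℝ) (hα : ∀ n, α n ∈ Set.Icc (0 : ℝ) 1)
    (r : ℕ → ℝ) (hr : ∀ n, 0 ≤ r n)
    (x : ℕ → X) (hx0 : x 0 ∈ A)
    (hiter : ∀ n, x (n + 1) =
      (1 - α n) • x n + α n • T ((r n / (r n + 1)) • x n + (1 / (r n + 1)) • T (x n))) :
    (∃ q, q ∈ A ∧ T q = q ∧ Filter.Tendsto x Filter.atTop (nhds q)) ↔
      Filter.liminf (fun n => Metric.infDist (x n) {q | q ∈ A ∧ T q = q})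
        Filter.atTop = 0 :=
  mean_value_mann_strong_convergence_iff_general A hAc hAconv T hmaps a b hab hT hF α hα r hr x hx0
    hiter
end

section
/- If a sequence {xₙ} in a complete metric space is Fejér monotone with respect to a nonempty closed set F and liminfₙ d(xₙ, F) = 0, then {xₙ} is a Cauchy sequence and its limit belongs to F. -/
/-!
Fejér monotonicity makes `n ↦ dist (x n) q` antitone for every `q ∈ F`, so once some `x N` is
`ε`-close to a point `q ∈ F`, the whole tail stays in the ball of radius `ε` around `q` and its
terms are `2ε`-close to each other. Since `liminf d(xₙ, F) = 0`, such `N` exist for every `ε`,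
so `x` is Cauchy; its limit `l` satisfies `d(l, F) = liminf d(xₙ, F) = 0` by continuity of
`d(·, F)`, hence `l ∈ F` as `F` is closed.
-/

open Filter Metric

def IsFejerMonotone {S : Type*} [PseudoMetricSpace S] (F : Set S) (x : ℕ → S) : Prop :=
  ∀ q ∈ F, ∀ n : ℕ, dist (x (n + 1)) q ≤ dist (x n) q

namespace IsFejerMonotone

variable {S : Type*} [PseudoMetricSpace S] {F : Set S} {x : ℕ → S}

theorem antitone_dist (hx : IsFejerMonotone F x) {q : S} (hq : q ∈ F) :
    Antitone fun n => dist (x n) q :=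
  antitone_nat_of_succ_le (hx q hq)

theorem infDist_le_dist (hx : IsFejerMonotone F x) {q : S} (hq : q ∈ F) (n : ℕ) :
    infDist (x n) F ≤ dist (x 0) q :=
  (infDist_le_dist_of_mem hq).trans (hx.antitone_dist hq n.zero_le)

theorem cauchySeq (hx : IsFejerMonotone F x) (hF : F.Nonempty)
    (hsmall : ∀ ε > 0, ∃ n, infDist (x n) F < ε) : CauchySeq x := by
  refine Metric.cauchySeq_iff'.2 fun ε hε => ?_
  obtain ⟨N, hN⟩ := hsmall (ε / 2) (half_pos hε)
  obtain ⟨q, hq, hNq⟩ := (infDist_lt_iff hF).1 hN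
  refine ⟨N, fun n hn => ?_⟩
  calc dist (x n) (x N) ≤ dist (x n) q + dist (x N) q := dist_triangle_right _ _ _
    _ ≤ dist (x N) q + dist (x N) q := by gcongr; exact hx.antitone_dist hq hn
    _ < ε := by linarith

end IsFejerMonotone

theorem fejer_monotone_liminf_zero_convergence
    {S : Type*} [MetricSpace S] [CompleteSpace S]
    (F : Set S) (hF : F.Nonempty) (hFc : IsClosed F)
    (x : ℕ → S)
    (hfejer : ∀ q ∈ F, ∀ n : ℕ, dist (x (n + 1)) q ≤ dist (x n) q)
    (hliminf : Filter.liminf (fun n => Metric.infDist (x n) F) Filter.atTop = 0) :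
    CauchySeq x ∧ ∃ q ∈ F, Filter.Tendsto x Filter.atTop (nhds q) := by
  have hx : IsFejerMonotone F x := hfejer
  -- The Fejér bound keeps `liminf` from being a junk value of an unbounded sequence.
  have hsmall : ∀ ε > 0, ∃ n, infDist (x n) F < ε := fun ε hε =>
    (frequently_lt_of_liminf_lt (isCoboundedUnder_ge_of_le _ (hx.infDist_le_dist hF.some_mem))
      (hliminf ▸ hε)).exists
  have hcauchy : CauchySeq x := hx.cauchySeq hF hsmall
  obtain ⟨l, hl⟩ := cauchySeq_tendsto_of_complete hcauchy
  have hl_infDist : infDist l F = 0 :=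
    hliminf ▸ (((continuous_infDist_pt F).tendsto l).comp hl).liminf_eq.symm
  exact ⟨hcauchy, l, (hFc.mem_iff_infDist_zero hF).2 hl_infDist, hl⟩
end

section
/- Let A be a nonempty closed convex subset of a real Hilbert space and T : A → A mean nonexpansive with constants a, b, a + b ≤ 1, b < 1. Then the fixed point set F(T) is convex. -/
/-!
At a fixed point `p` the mean nonexpansive inequality reads `‖Tz - p‖ ≤ (a + b) ‖z - p‖`, so `T` is
quasi-nonexpansive. If `x, y` are fixed and `z` lies on the segment `[x, y]`, then `Tz` is at
least as close to `x` and to `y` as `z` is; since `dist x z + dist z y = dist x y`, the triangle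
inequality through `Tz` is an equality, which in a strictly convex space (such as a Hilbert space)
forces `Tz = z`.
-/

open AffineMap

theorem eq_lineMap_of_dist_le_mul_of_dist_le_mul {V P : Type*} [NormedAddCommGroup V]
    [NormedSpace ℝ V] [StrictConvexSpace ℝ V] [MetricSpace P] [NormedAddTorsor V P]
    {x y z : P} {r : ℝ}
    (hxy : dist x y ≤ r * dist x z) (hyz : dist y z ≤ (1 - r) * dist x z) :
    y = lineMap x z r := by
  have htri := dist_triangle x y z
  exact eq_lineMap_of_dist_eq_mul_of_dist_eq_mul (by linarith) (by linarith)

def IsQuasiNonexpansiveOn {X : Type*} [PseudoMetricSpace X] (T : X → X) (A : Set X) : Prop :=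
  ∀ z ∈ A, ∀ p ∈ A, T p = p → dist (T z) p ≤ dist z p

theorem isQuasiNonexpansiveOn_of_mean_nonexpansive {E : Type*} [SeminormedAddCommGroup E]
    {A : Set E} {T : E → E} {a b : ℝ} (hab : a + b ≤ 1)
    (hT : ∀ x ∈ A, ∀ y ∈ A, ‖T x - T y‖ ≤ a * ‖x - y‖ + b * ‖x - T y‖) :
    IsQuasiNonexpansiveOn T A := by
  intro z hz p hp hTp
  rw [dist_eq_norm, dist_eq_norm]
  calc ‖T z - p‖ ≤ a * ‖z - p‖ + b * ‖z - p‖ := by simpa only [hTp] using hT z hz p hp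
    _ = (a + b) * ‖z - p‖ := by ring
    _ ≤ ‖z - p‖ := mul_le_of_le_one_left (norm_nonneg _) hab

theorem IsQuasiNonexpansiveOn.convex_fixedPoints {E : Type*} [NormedAddCommGroup E]
    [NormedSpace ℝ E] [StrictConvexSpace ℝ E] {A : Set E} {T : E → E}
    (hT : IsQuasiNonexpansiveOn T A) (hA : Convex ℝ A) :
    Convex ℝ {x | x ∈ A ∧ T x = x} := by
  rintro x ⟨hxA, hTx⟩ y ⟨hyA, hTy⟩ s t hs ht hst
  have hz : s • x + t • y = lineMap x y t := by
    rw [lineMap_apply_module, ← hst, add_sub_cancel_right]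
  have hzA : lineMap x y t ∈ A := hz ▸ hA hxA hyA hs ht hst
  refine hz ▸ ⟨hzA, ?_⟩
  apply eq_lineMap_of_dist_le_mul_of_dist_le_mul
  · calc dist x (T (lineMap x y t)) ≤ dist (lineMap x y t) x := by
          rw [dist_comm]; exact hT _ hzA x hxA hTx
      _ = t * dist x y := by rw [dist_lineMap_left, Real.norm_of_nonneg ht]
  · calc dist (T (lineMap x y t)) y ≤ dist (lineMap x y t) y := hT _ hzA y hyA hTy
      _ = (1 - t) * dist x y := by
          rw [dist_lineMap_right, Real.norm_of_nonneg (by linarith)]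

theorem mean_nonexpansive_fixed_point_set_convex_general
    {H : Type*} [NormedAddCommGroup H] [InnerProductSpace ℝ H]
    (A : Set H) (hAconv : Convex ℝ A)
    (T : H → H)
    (a b : ℝ) (hab : a + b ≤ 1)
    (hT : ∀ x ∈ A, ∀ y ∈ A, ‖T x - T y‖ ≤ a * ‖x - y‖ + b * ‖x - T y‖) :
    Convex ℝ {x | x ∈ A ∧ T x = x} :=
  (isQuasiNonexpansiveOn_of_mean_nonexpansive hab hT).convex_fixedPoints hAconv

theorem mean_nonexpansive_fixed_point_set_convex
    {H : Type*} [NormedAddCommGroup H] [InnerProductSpace ℝ H] [CompleteSpace H]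
    (A : Set H) (hA : A.Nonempty) (hAc : IsClosed A) (hAconv : Convex ℝ A)
    (T : H → H) (hmaps : Set.MapsTo T A A)
    (a b : ℝ) (ha : 0 ≤ a) (hb : 0 ≤ b) (hab : a + b ≤ 1) (hb1 : b < 1)
    (hT : ∀ x ∈ A, ∀ y ∈ A, ‖T x - T y‖ ≤ a * ‖x - y‖ + b * ‖x - T y‖) :
    Convex ℝ {x | x ∈ A ∧ T x = x} :=
  mean_nonexpansive_fixed_point_set_convex_general A hAconv T a b hab hT
end

section
/- Let {xₙ} be the mean-value Mann iteration for a mean nonexpansive mapping T with fixed point p. If limₙ d(xₙ, p) = c > 0 and limₙ d(x_{n+1}, p) = c, and ωₙ = (rₙ/(rₙ+1))xₙ + (1/(rₙ+1))Txₙ, then limₙ d(Tωₙ, p) = c and limₙ d(ωₙ, p) = c. -/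
/-!
Putting the fixed point `p` as second argument in the mean nonexpansiveness inequality gives
`‖T y - p‖ ≤ (a + b) ‖y - p‖`, so `T` is quasi-nonexpansive at `p`. Hence `‖T ωₙ - p‖ ≤ ‖ωₙ - p‖ ≤ ‖xₙ - p‖`, and convexity of the norm
gives `‖xₙ₊₁ - p‖ - ‖xₙ - p‖ ≤ αₙ (‖T ωₙ - p‖ - ‖xₙ - p‖) ≤ ε (‖T ωₙ - p‖ - ‖xₙ - p‖)`.
Both outer bounds tend to `c`, which squeezes `‖T ωₙ - p‖` and then `‖ωₙ - p‖`.
-/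

open Filter Topology

theorem norm_apply_sub_le_of_mean_nonexpansive {X : Type*} [SeminormedAddCommGroup X]
    {A : Set X} {T : X → X} {a b : ℝ} (hab : a + b ≤ 1)
    (hT : ∀ x ∈ A, ∀ y ∈ A, ‖T x - T y‖ ≤ a * ‖x - y‖ + b * ‖x - T y‖)
    {p : X} (hpA : p ∈ A) (hp : T p = p) {y : X} (hy : y ∈ A) :
    ‖T y - p‖ ≤ ‖y - p‖ := by
  calc ‖T y - p‖ ≤ (a + b) * ‖y - p‖ := by simpa [hp, add_mul] using hT y hy p hpA
    _ ≤ ‖y - p‖ := mul_le_of_le_one_left (norm_nonneg _) hab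

theorem norm_smul_add_smul_sub_le {E : Type*} [SeminormedAddCommGroup E] [NormedSpace ℝ E]
    (u v p : E) {s t : ℝ} (hs : 0 ≤ s) (ht : 0 ≤ t) (hst : s + t = 1) :
    ‖s • u + t • v - p‖ ≤ s * ‖u - p‖ + t * ‖v - p‖ := by
  simpa only [dist_eq_norm, smul_eq_mul] using
    (convexOn_dist p convex_univ).2 (Set.mem_univ u) (Set.mem_univ v) hs ht hst

theorem Convex.div_add_one_smul_add_mem {E : Type*} [AddCommGroup E] [Module ℝ E] {s : Set E}
    (hs : Convex ℝ s) {u v : E} (hu : u ∈ s) (hv : v ∈ s) {r : ℝ} (hr : 0 ≤ r) :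
    (r / (r + 1)) • u + (1 / (r + 1)) • v ∈ s := by
  have hr1 : 0 < r + 1 := by linarith
  exact hs hu hv (div_nonneg hr hr1.le) (div_nonneg zero_le_one hr1.le)
    (by rw [← add_div, div_self hr1.ne'])

theorem tendsto_of_le_of_succ_le_convexComb {d e α : ℕ → ℝ} {ε c : ℝ} (hε : 0 < ε)
    (hα : ∀ n, ε ≤ α n) (hd : Tendsto d atTop (𝓝 c))
    (hstep : ∀ n, d (n + 1) ≤ (1 - α n) * d n + α n * e n) (hed : ∀ n, e n ≤ d n) :
    Tendsto e atTop (𝓝 c) := by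
  have hlower : ∀ n, d n + (d (n + 1) - d n) / ε ≤ e n := by
    intro n
    have hgap : d (n + 1) - d n ≤ ε * (e n - d n) := by
      nlinarith [hstep n, hα n, hed n]
    have := (div_le_iff₀' hε).2 hgap
    linarith
  have hlim : Tendsto (fun n => d n + (d (n + 1) - d n) / ε) atTop (𝓝 c) := by
    simpa using hd.add (((hd.comp (tendsto_add_atTop_nat 1)).sub hd).div_const ε)
  exact tendsto_of_tendsto_of_tendsto_of_le_of_le hlim hd hlower hed

theorem mean_value_mann_omega_norm_limits_general
    {X : Type*} [NormedAddCommGroup X] [NormedSpace ℝ X]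
    (A : Set X) (hAconv : Convex ℝ A)
    (T : X → X) (hmaps : Set.MapsTo T A A)
    (a b : ℝ) (hab : a + b ≤ 1)
    (hT : ∀ x ∈ A, ∀ y ∈ A, ‖T x - T y‖ ≤ a * ‖x - y‖ + b * ‖x - T y‖)
    (p : X) (hpA : p ∈ A) (hp : T p = p)
    (ε : ℝ) (hε : ε ∈ Set.Ioo (0 : ℝ) (1 / 2))
    (α : ℕ → ℝ) (hα : ∀ n, α n ∈ Set.Icc ε (1 - ε))
    (r : ℕ → ℝ) (hr : ∀ n, 0 ≤ r n)
    (x ω : ℕ → X) (hx0 : x 0 ∈ A)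
    (hω : ∀ n, ω n = (r n / (r n + 1)) • x n + (1 / (r n + 1)) • T (x n))
    (hiter : ∀ n, x (n + 1) = (1 - α n) • x n + α n • T (ω n))
    (c : ℝ)
    (hlim : Filter.Tendsto (fun n => ‖x n - p‖) Filter.atTop (nhds c)) :
    Filter.Tendsto (fun n => ‖T (ω n) - p‖) Filter.atTop (nhds c) ∧
    Filter.Tendsto (fun n => ‖ω n - p‖) Filter.atTop (nhds c) := by
  have hTp : ∀ y ∈ A, ‖T y - p‖ ≤ ‖y - p‖ := fun y hy =>
    norm_apply_sub_le_of_mean_nonexpansive hab hT hpA hp hy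
  have hα0 : ∀ n, 0 ≤ α n := fun n => hε.1.le.trans (hα n).1
  have hα1 : ∀ n, 0 ≤ 1 - α n := fun n => by linarith [(hα n).2, hε.1]
  have hωA : ∀ n, x n ∈ A → ω n ∈ A := fun n hxn =>
    hω n ▸ hAconv.div_add_one_smul_add_mem hxn (hmaps hxn) (hr n)
  have hxA : ∀ n, x n ∈ A := by
    intro n
    induction n with
    | zero => exact hx0
    | succ k ih =>
      rw [hiter k]
      exact hAconv ih (hmaps (hωA k ih)) (hα1 k) (hα0 k) (sub_add_cancel 1 (α k))
  -- `ωₙ` is a convex combination of two points of the closed ball of radius `‖xₙ - p‖` about `p`.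
  have hωx : ∀ n, ‖ω n - p‖ ≤ ‖x n - p‖ := fun n => by
    have hball := (convex_closedBall p ‖x n - p‖).div_add_one_smul_add_mem (v := T (x n))
      (dist_eq_norm _ _).le (by simpa [dist_eq_norm] using hTp _ (hxA n)) (hr n)
    rwa [Metric.mem_closedBall, dist_eq_norm, ← hω n] at hball
  have hTω : ∀ n, ‖T (ω n) - p‖ ≤ ‖ω n - p‖ := fun n => hTp _ (hωA n (hxA n))
  have hTωlim : Tendsto (fun n => ‖T (ω n) - p‖) atTop (𝓝 c) :=
    tendsto_of_le_of_succ_le_convexComb hε.1 (fun n => (hα n).1) hlim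
      (fun n => hiter n ▸ norm_smul_add_smul_sub_le _ _ p (hα1 n) (hα0 n) (sub_add_cancel 1 _))
      (fun n => (hTω n).trans (hωx n))
  exact ⟨hTωlim, tendsto_of_tendsto_of_tendsto_of_le_of_le hTωlim hlim hTω hωx⟩

theorem mean_value_mann_omega_norm_limits
    {X : Type*} [NormedAddCommGroup X] [NormedSpace ℝ X] [UniformConvexSpace X]
    (A : Set X) (hA : A.Nonempty) (hAc : IsClosed A) (hAconv : Convex ℝ A)
    (T : X → X) (hmaps : Set.MapsTo T A A)
    (a b : ℝ) (ha : 0 ≤ a) (hb : 0 ≤ b) (hab : a + b ≤ 1)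
    (hT : ∀ x ∈ A, ∀ y ∈ A, ‖T x - T y‖ ≤ a * ‖x - y‖ + b * ‖x - T y‖)
    (p : X) (hpA : p ∈ A) (hp : T p = p)
    (ε : ℝ) (hε : ε ∈ Set.Ioo (0 : ℝ) (1 / 2))
    (α : ℕ → ℝ) (hα : ∀ n, α n ∈ Set.Icc ε (1 - ε))
    (r : ℕ → ℝ) (hr : ∀ n, 0 ≤ r n)
    (x ω : ℕ → X) (hx0 : x 0 ∈ A)
    (hω : ∀ n, ω n = (r n / (r n + 1)) • x n + (1 / (r n + 1)) • T (x n))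
    (hiter : ∀ n, x (n + 1) = (1 - α n) • x n + α n • T (ω n))
    (c : ℝ) (hc : 0 < c)
    (hlim : Filter.Tendsto (fun n => ‖x n - p‖) Filter.atTop (nhds c))
    (hlim' : Filter.Tendsto (fun n => ‖x (n + 1) - p‖) Filter.atTop (nhds c)) :
    Filter.Tendsto (fun n => ‖T (ω n) - p‖) Filter.atTop (nhds c) ∧
    Filter.Tendsto (fun n => ‖ω n - p‖) Filter.atTop (nhds c) :=
  mean_value_mann_omega_norm_limits_general A hAconv T hmaps a b hab hT p hpA hp ε hε α hα r hr x ω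
    hx0 hω hiter c hlim
end

section
/- Demiclosedness principle: let A be a nonempty closed convex subset of a real Hilbert space and T : A → A mean nonexpansive with b < 1. If {xₙ} ⊆ A converges weakly to z and ‖xₙ − Txₙ‖ → 0, then Tz = z. -/
/-!
A closed convex set is weakly closed, so `z ∈ A` and the mean-nonexpansive inequality at
`(xₙ, z)`, together with `‖xₙ - T xₙ‖ → 0`, gives `‖xₙ - T z‖ ≤ ‖xₙ - z‖ + εₙ` with `εₙ → 0`.
Expanding `‖xₙ - T z‖² = ‖xₙ - z‖² - 2⟪xₙ - z, T z - z⟫ + ‖T z - z‖²` and using that weakly convergent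
sequences are bounded, the right-hand side of
`‖T z - z‖² ≤ 2⟪xₙ - z, T z - z⟫ + 2 εₙ ‖xₙ - z‖ + εₙ²` tends to `0`, so `T z = z`.
-/

open Filter Topology InnerProductSpace
open scoped InnerProductSpace

section WeakConvergence

variable {H : Type*} [NormedAddCommGroup H] [InnerProductSpace ℝ H]

theorem tendsto_toWeakSpace_of_tendsto_inner [CompleteSpace H] {α : Type*} {l : Filter α}
    {x : α → H} {z : H}
    (h : ∀ y, Tendsto (fun n => ⟪x n, y⟫_ℝ) l (𝓝 ⟪z, y⟫_ℝ)) :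
    Tendsto (fun n => toWeakSpace ℝ H (x n)) l (𝓝 (toWeakSpace ℝ H z)) := by
  rw [show 𝓝 (toWeakSpace ℝ H z) = _ from nhds_induced _ _]
  refine tendsto_comap_iff.2 (tendsto_pi_nhds.2 fun f => ?_)
  have hf : ∀ u : H, ⟪u, (toDual ℝ H).symm f⟫_ℝ = f u := fun u => by
    rw [real_inner_comm, toDual_symm_apply]
  have hfx := h ((toDual ℝ H).symm f)
  simp only [hf] at hfx
  exact hfx

theorem Convex.mem_of_tendsto_inner [CompleteSpace H] {s : Set H} (hs : Convex ℝ s)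
    (hsc : IsClosed s) {x : ℕ → H} {z : H} (hx : ∀ n, x n ∈ s)
    (h : ∀ y, Tendsto (fun n => ⟪x n, y⟫_ℝ) atTop (𝓝 ⟪z, y⟫_ℝ)) : z ∈ s := by
  have hs_weak : IsClosed (toWeakSpace ℝ H '' s) := by
    rw [← closure_eq_iff_isClosed, ← hs.toWeakSpace_closure ℝ, hsc.closure_eq]
  simpa using hs_weak.mem_of_tendsto (tendsto_toWeakSpace_of_tendsto_inner h)
    (Eventually.of_forall fun n => Set.mem_image_of_mem _ (hx n))

theorem exists_norm_le_of_tendsto_inner [CompleteSpace H] {x : ℕ → H} {z : H}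
    (h : ∀ y, Tendsto (fun n => ⟪x n, y⟫_ℝ) atTop (𝓝 ⟪z, y⟫_ℝ)) : ∃ C, ∀ n, ‖x n‖ ≤ C := by
  obtain ⟨C, hC⟩ : ∃ C, ∀ n, ‖toDual ℝ H (x n)‖ ≤ C :=
    banach_steinhaus fun y => by
      obtain ⟨M, hM⟩ := (h y).norm.bddAbove_range
      exact ⟨M, fun n => hM ⟨n, rfl⟩⟩
  exact ⟨C, fun n => by simpa using hC n⟩

theorem tendsto_inner_sub_of_tendsto_inner {x : ℕ → H} {z : H}
    (h : ∀ y, Tendsto (fun n => ⟪x n, y⟫_ℝ) atTop (𝓝 ⟪z, y⟫_ℝ)) (y : H) :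
    Tendsto (fun n => ⟪x n - z, y⟫_ℝ) atTop (𝓝 0) := by
  simpa only [inner_sub_left, sub_self] using (h y).sub_const ⟪z, y⟫_ℝ

/-- An Opial-type property of Hilbert spaces. -/
theorem eq_of_tendsto_inner_of_norm_sub_le [CompleteSpace H] {x : ℕ → H} {z p : H} {ε : ℕ → ℝ}
    (h : ∀ y, Tendsto (fun n => ⟪x n, y⟫_ℝ) atTop (𝓝 ⟪z, y⟫_ℝ))
    (hε : Tendsto ε atTop (𝓝 0)) (hle : ∀ n, ‖x n - p‖ ≤ ‖x n - z‖ + ε n) : p = z := by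
  obtain ⟨C, hC⟩ := exists_norm_le_of_tendsto_inner h
  have hbound : ∀ n, ‖p - z‖ ^ 2 ≤ 2 * ⟪x n - z, p - z⟫_ℝ + 2 * |ε n| * (C + ‖z‖) + ε n ^ 2 := by
    intro n
    have hexpand : ‖x n - p‖ ^ 2 = ‖x n - z‖ ^ 2 - 2 * ⟪x n - z, p - z⟫_ℝ + ‖p - z‖ ^ 2 := by
      rw [show x n - p = (x n - z) - (p - z) by abel, norm_sub_sq_real]
    have hsq : ‖x n - p‖ ^ 2 ≤ (‖x n - z‖ + ε n) ^ 2 :=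
      pow_le_pow_left₀ (norm_nonneg _) (hle n) 2
    have hxz : ‖x n - z‖ ≤ C + ‖z‖ := (norm_sub_le _ _).trans (by linarith [hC n])
    nlinarith [le_abs_self (ε n), neg_abs_le (ε n), abs_nonneg (ε n), norm_nonneg (x n - z)]
  have hlim : Tendsto (fun n => 2 * ⟪x n - z, p - z⟫_ℝ + 2 * |ε n| * (C + ‖z‖) + ε n ^ 2)
      atTop (𝓝 0) := by
    simpa using (((tendsto_inner_sub_of_tendsto_inner h (p - z)).const_mul 2).add
      ((hε.abs.const_mul 2).mul_const (C + ‖z‖))).add (hε.pow 2)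
  have hpz : ‖p - z‖ ^ 2 ≤ 0 := ge_of_tendsto hlim (Eventually.of_forall hbound)
  rw [← sub_eq_zero, ← norm_eq_zero]
  exact pow_eq_zero_iff two_ne_zero |>.1 (le_antisymm hpz (sq_nonneg _))

end WeakConvergence

theorem norm_sub_apply_le_of_mean_nonexpansive {E : Type*} [SeminormedAddCommGroup E]
    {T : E → E} {a b : ℝ} (hab : a + b ≤ 1) (hb1 : b < 1) {x y : E}
    (hT : ‖T x - T y‖ ≤ a * ‖x - y‖ + b * ‖x - T y‖) :
    ‖x - T y‖ ≤ ‖x - y‖ + ‖x - T x‖ / (1 - b) := by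
  have hb : 0 < 1 - b := by linarith
  have htri : ‖x - T y‖ ≤ ‖x - T x‖ + ‖T x - T y‖ := norm_sub_le_norm_sub_add_norm_sub _ _ _
  have ha : a * ‖x - y‖ ≤ (1 - b) * ‖x - y‖ :=
    mul_le_mul_of_nonneg_right (by linarith) (norm_nonneg _)
  rw [← mul_le_mul_iff_right₀ hb, mul_add, mul_div_cancel₀ _ hb.ne']
  linarith

theorem mean_nonexpansive_demiclosedness_general
    {H : Type*} [NormedAddCommGroup H] [InnerProductSpace ℝ H] [CompleteSpace H]
    (A : Set H) (hAc : IsClosed A) (hAconv : Convex ℝ A)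
    (T : H → H)
    (a b : ℝ) (hab : a + b ≤ 1) (hb1 : b < 1)
    (hT : ∀ x ∈ A, ∀ y ∈ A, ‖T x - T y‖ ≤ a * ‖x - y‖ + b * ‖x - T y‖)
    (x : ℕ → H) (hx : ∀ n, x n ∈ A)
    (z : H)
    (hweak : ∀ y : H, Filter.Tendsto (fun n => inner ℝ (x n) y : ℕ → ℝ)
      Filter.atTop (nhds (inner ℝ z y)))
    (hreg : Filter.Tendsto (fun n => ‖x n - T (x n)‖) Filter.atTop (nhds 0)) :
    T z = z := by
  have hzA : z ∈ A := hAconv.mem_of_tendsto_inner hAc hx hweak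
  refine eq_of_tendsto_inner_of_norm_sub_le hweak (ε := fun n => ‖x n - T (x n)‖ / (1 - b))
    (by simpa using hreg.div_const (1 - b)) fun n => ?_
  exact norm_sub_apply_le_of_mean_nonexpansive hab hb1 (hT (x n) (hx n) z hzA)

theorem mean_nonexpansive_demiclosedness
    {H : Type*} [NormedAddCommGroup H] [InnerProductSpace ℝ H] [CompleteSpace H]
    (A : Set H) (hA : A.Nonempty) (hAc : IsClosed A) (hAconv : Convex ℝ A)
    (T : H → H) (hmaps : Set.MapsTo T A A)
    (a b : ℝ) (ha : 0 ≤ a) (hb : 0 ≤ b) (hab : a + b ≤ 1) (hb1 : b < 1)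
    (hT : ∀ x ∈ A, ∀ y ∈ A, ‖T x - T y‖ ≤ a * ‖x - y‖ + b * ‖x - T y‖)
    (x : ℕ → H) (hx : ∀ n, x n ∈ A)
    (z : H)
    (hweak : ∀ y : H, Filter.Tendsto (fun n => inner ℝ (x n) y : ℕ → ℝ)
      Filter.atTop (nhds (inner ℝ z y)))
    (hreg : Filter.Tendsto (fun n => ‖x n - T (x n)‖) Filter.atTop (nhds 0)) :
    T z = z :=
  mean_nonexpansive_demiclosedness_general A hAc hAconv T a b hab hb1 hT x hx z hweak hreg
end
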